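/- Every open neighborhood of the identity element [e_x] in π₁^qtop(X,x) contains the entire SG subgroup π₁^sg(X,x); consequently π₁^sg(X,x) ⊆ closure({[e_x]}). -/

import Mathlib

/-! In the quotient topology, left translations and inversion of `π₁(X, x)` are continuous (they
lift to concatenation and reversal of loops), so the classes `g` with `g ⤳ 1`, i.e. lying in every
open neighbourhood of `1`, form a subgroup, and it is enough to treat the generators `[α β α⁻¹]`.
Every compact-open neighbourhood of the constant loop at `y` contains all loops inside some open
neighbourhood of `y`, so a small loop `β` is homotopic to a loop in any such neighbourhood; since
`γ ↦ α γ α⁻¹` is continuous and sends the constant loop to a null-homotopic one, `[α β α⁻¹] ⤳ 1`.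
Translating `g⁻¹ ⤳ 1` by `g` gives `1 ⤳ g`, that is, `g ∈ closure {1}`. -/

open FundamentalGroup

attribute [local instance] Path.Homotopic.setoid

noncomputable section

/-- A loop `β` based at `y` is a *small loop* if it is homotopic (rel endpoints) to a loop
contained in every open neighborhood of `y`. -/
def IsSmallLoop {X : TopCat} {y : X} (β : Path y y) : Prop :=
  ∀ U : Set X, IsOpen U → y ∈ U →
    ∃ β' : Path y y, (∀ t, β' t ∈ U) ∧ Path.Homotopic β β'

/-- The small loop group `π₁ˢ(X, x)`: the set of homotopy classes of small loops at `x`. -/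
def smallLoopSet {X : TopCat} (x : X) : Set (FundamentalGroup X x) :=
  {g | ∃ β : Path x x, IsSmallLoop β ∧ g = fromPath ⟦β⟧}

/-- The SG subgroup `π₁ˢᵍ(X, x)`: generated by conjugates of small loop classes along paths. -/
def sgSubgroup {X : TopCat} (x : X) : Subgroup (FundamentalGroup X x) :=
  Subgroup.closure {g | ∃ (y : X) (α : Path x y) (β : Path y y),
    IsSmallLoop β ∧ g = fromPath ⟦α.trans (β.trans α.symm)⟧}

/-- The quotient topology on the fundamental group, coinduced from the loop space
(with the compact-open topology). -/
def qtop {X : TopCat} (x : X) : TopologicalSpace (FundamentalGroup X x) :=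
  TopologicalSpace.coinduced (fun β : Path x x => fromPath ⟦β⟧) inferInstance

open Filter Topology Set

section SpecializesOne

variable (G : Type*) [Group G] [TopologicalSpace G] [ContinuousConstSMul G G] [ContinuousInv G]

def specializesOneSubgroup : Subgroup G where
  carrier := {g | g ⤳ 1}
  one_mem' := specializes_rfl
  mul_mem' {a b} ha hb := by
    have hab : (a * b) ⤳ a := by simpa using hb.const_smul a
    exact hab.trans ha
  inv_mem' ha := by simpa using ha.inv

variable {G}

theorem one_specializes_of_specializes_one {g : G} (h : g ⤳ 1) : 1 ⤳ g := by
  simpa using h.inv.const_smul g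

end SpecializesOne

theorem ContinuousMap.exists_isOpen_forall_mem_of_mem_nhds_const {K Y : Type*}
    [TopologicalSpace K] [TopologicalSpace Y] {y : Y} {V : Set C(K, Y)}
    (hV : V ∈ 𝓝 (ContinuousMap.const K y)) :
    ∃ U, IsOpen U ∧ y ∈ U ∧ ∀ g : C(K, Y), range g ⊆ U → g ∈ V := by
  have hle : Tendsto id ((𝓝 y).smallSets.comap fun g : C(K, Y) => range g)
      (𝓝 (ContinuousMap.const K y)) := by
    refine tendsto_nhds_compactOpen.2 fun L _ U hU hmaps => ?_
    rcases L.eq_empty_or_nonempty with rfl | ⟨t, ht⟩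
    · exact .of_forall fun _ => mapsTo_empty _ _
    · refine ((eventually_smallSets_subset.2 (hU.mem_nhds (hmaps ht))).comap _).mono
        fun g hg s _ => hg (mem_range_self s)
  obtain ⟨U, ⟨hyU, hU⟩, hUV⟩ := ((nhds_basis_opens y).smallSets.comap _).mem_iff.1 (hle hV)
  exact ⟨U, hU, hyU, fun g hg => hUV hg⟩

theorem Path.exists_isOpen_forall_mem_of_mem_nhds_refl {Y : Type*} [TopologicalSpace Y] {y : Y}
    {V : Set (Path y y)} (hV : V ∈ 𝓝 (Path.refl y)) :
    ∃ U, IsOpen U ∧ y ∈ U ∧ ∀ γ : Path y y, (∀ t, γ t ∈ U) → γ ∈ V := by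
  obtain ⟨W, hW, hWV⟩ := (mem_nhds_induced _ _ _).1 hV
  obtain ⟨U, hU, hyU, hUW⟩ := ContinuousMap.exists_isOpen_forall_mem_of_mem_nhds_const hW
  exact ⟨U, hU, hyU, fun γ hγ => hWV (hUW _ (range_subset_iff.2 hγ))⟩

section QuotientTopology

variable {X : TopCat} {x y : X}

theorem continuous_qtop_of_lift {φ : FundamentalGroup X y → FundamentalGroup X x}
    {f : Path y y → Path x x} (hf : Continuous f)
    (hφ : ∀ γ, φ (fromPath ⟦γ⟧) = fromPath ⟦f γ⟧) : Continuous[qtop y, qtop x] φ := by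
  refine continuous_coinduced_dom.2 ?_
  simp only [Function.comp_def, hφ]
  exact @Continuous.comp _ _ _ _ _ (qtop x) _ _ continuous_coinduced_rng hf

theorem continuousConstSMul_qtop (x : X) :
    @ContinuousConstSMul (FundamentalGroup X x) (FundamentalGroup X x) (qtop x) _ := by
  refine @ContinuousConstSMul.mk (FundamentalGroup X x) (FundamentalGroup X x) (qtop x) _
    fun h => ?_
  induction h using Path.Homotopic.Quotient.ind with
  | mk δ => exact continuous_qtop_of_lift (f := fun γ => γ.trans δ) (by fun_prop) fun _ => rfl

theorem continuousInv_qtop (x : X) : @ContinuousInv (FundamentalGroup X x) (qtop x) _ :=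
  @ContinuousInv.mk (FundamentalGroup X x) (qtop x) _
    (continuous_qtop_of_lift Path.continuous_symm fun _ => rfl)

theorem IsSmallLoop.exists_homotopic_mem_of_mem_nhds_refl {β : Path y y} (hβ : IsSmallLoop β)
    {V : Set (Path y y)} (hV : V ∈ 𝓝 (Path.refl y)) : ∃ β' ∈ V, β.Homotopic β' := by
  obtain ⟨U, hU, hyU, hUV⟩ := Path.exists_isOpen_forall_mem_of_mem_nhds_refl hV
  obtain ⟨β', hβ'U, hββ'⟩ := hβ U hU hyU
  exact ⟨β', hUV β' hβ'U, hββ'⟩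

theorem specializes_one_of_isSmallLoop (α : Path x y) {β : Path y y} (hβ : IsSmallLoop β) :
    @Specializes _ (qtop x) (fromPath ⟦α.trans (β.trans α.symm)⟧) 1 := by
  let _ := qtop x
  set conj : Path y y → FundamentalGroup X x := fun γ => fromPath ⟦α.trans (γ.trans α.symm)⟧
  have hconj : Continuous conj := continuous_coinduced_rng.comp (by fun_prop)
  have hrefl : conj (Path.refl y) = 1 :=
    congrArg fromPath (Quotient.sound (((Path.Homotopic.refl α).hcomp (.refl_trans α.symm)).trans
      (.trans_symm α)))
  refine specializes_iff_forall_open.2 fun U hU h1 => ?_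
  obtain ⟨β', hβ'U, hββ'⟩ := hβ.exists_homotopic_mem_of_mem_nhds_refl
    ((hU.preimage hconj).mem_nhds (by rwa [mem_preimage, hrefl]))
  have : conj β = conj β' :=
    congrArg fromPath (Quotient.sound (.hcomp (.refl α) (.hcomp hββ' (.refl α.symm))))
  show conj β ∈ U
  rwa [this]

end QuotientTopology

/-- Every open neighborhood of the identity in `π₁ᑫᵗᵒᵖ(X, x)` contains the SG subgroup
`π₁ˢᵍ(X, x)`; consequently `π₁ˢᵍ(X, x) ⊆ closure {1}`. -/
theorem sgSubgroup_subset_nhds_one {X : TopCat} (x : X) :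
    (∀ U : Set (FundamentalGroup X x), @IsOpen _ (qtop x) U →
        (1 : FundamentalGroup X x) ∈ U → (sgSubgroup x : Set (FundamentalGroup X x)) ⊆ U) ∧
      (sgSubgroup x : Set (FundamentalGroup X x)) ⊆
        @closure _ (qtop x) {(1 : FundamentalGroup X x)} := by
  let _ := qtop x
  have := continuousConstSMul_qtop x
  have := continuousInv_qtop x
  have hsg : sgSubgroup x ≤ specializesOneSubgroup (FundamentalGroup X x) :=
    (Subgroup.closure_le _).2 fun _ ⟨_, α, _, hβ, hg⟩ => hg ▸ specializes_one_of_isSmallLoop α hβ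
  exact ⟨fun U hU h1 _ hg => specializes_iff_forall_open.1 (hsg hg) U hU h1,
    fun _ hg => specializes_iff_mem_closure.1 (one_specializes_of_specializes_one (hsg hg))⟩
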